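/- arXiv:2405.03934 — 3 statements merged into one kernel-verified Lean document; each statement's English description precedes it below -/
import Mathlib

section
/- The closed Y-frieze pattern of width n obtained by placing the tuple (1,2,…,n) along a north-west to south-east diagonal and performing horizontal knitting has all entries in its nonzero rows positive integers. -/
/-- A closed Y-frieze pattern of width `n`: a staggered array `b i j` (row `k`
consists of entries `b i (i+k+2)`) satisfying the Y-diamond rule, with zeroth
row and `(n+1)`-th row of `0`s, a row of `-1`s below, nonzero intermediate
rows, and normalized to `0` outside the pattern. -/
structure ClosedYFrieze (n : ℕ) where
  b : ℤ → ℤ → ℚ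
  diamond : ∀ i j : ℤ, 3 ≤ j - i → j - i ≤ (n : ℤ) + 3 →
    b i j * b (i + 1) (j + 1) = (1 + b (i + 1) j) * (1 + b i (j + 1))
  topZero : ∀ i : ℤ, b i (i + 2) = 0
  botZero : ∀ i : ℤ, b i (i + (n : ℤ) + 3) = 0
  negRow : ∀ i : ℤ, b i (i + (n : ℤ) + 4) = -1
  rowsNonzero : ∀ k : ℕ, 1 ≤ k → k ≤ n → ∃ i : ℤ, b i (i + (k : ℤ) + 2) ≠ 0
  outside : ∀ i j : ℤ, j - i ≤ 1 ∨ (n : ℤ) + 5 ≤ j - i → b i j = 0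

/-- All entries of the nonzero rows are positive rationals. -/
def ClosedYFrieze.Positive {n : ℕ} (P : ClosedYFrieze n) : Prop :=
  ∀ (i : ℤ) (k : ℕ), 1 ≤ k → k ≤ n → 0 < P.b i (i + (k : ℤ) + 2)

/-- All entries of the nonzero rows are positive integers. -/
def ClosedYFrieze.Arithmetic {n : ℕ} (P : ClosedYFrieze n) : Prop :=
  ∀ (i : ℤ) (k : ℕ), 1 ≤ k → k ≤ n → ∃ m : ℕ, 0 < m ∧ P.b i (i + (k : ℤ) + 2) = (m : ℚ)

/-!
The knitted pattern is `b i j = m i j * m (i+1) (j-1)`, where `m` is the Conway–Coxeter frieze of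
order `n + 3` coming from the fan triangulation of the `(n+3)`-gon at vertex `0`. Two
instances of the unimodular rule `m i j * m (i+1) (j+1) = 1 + m (i+1) j * m i (j+1)` multiply
to the Y-diamond rule, the entries are products of positive integers, and the diagonal through
`(0, 2)` reads `m 0 (k+2) * m 1 (k+1) = 1 * k`. Conversely, as long as the entries of a diagonal
are nonzero, the Y-diamond rule knits the neighbouring diagonals from it in a unique way, so a
positive closed Y-frieze is determined by any one of its diagonals.
-/

lemma Int.emod_ne_emod_of_sub_lt {N a b : ℤ} (h₁ : 0 < b - a) (h₂ : b - a < N) :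
    a % N ≠ b % N := fun h =>
  (Int.eq_zero_of_dvd_of_nonneg_of_lt h₁.le h₂ (Int.ModEq.dvd h)).not_gt h₁

namespace ConwayCoxeter

/-- The Conway–Coxeter frieze of the fan triangulation at vertex `0` of a polygon with vertices
labelled `0, 1, 2, …`. -/
def fanLabel (p q : ℤ) : ℤ :=
  if p = q then 0 else if p = 0 ∨ q = 0 then 1 else |q - p|

lemma fanLabel_comm (p q : ℤ) : fanLabel p q = fanLabel q p := by
  unfold fanLabel
  split_ifs <;> first | omega | exact abs_sub_comm q p

lemma fanLabel_pos {p q : ℤ} (h : p ≠ q) : 0 < fanLabel p q := by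
  unfold fanLabel
  split_ifs <;> first | omega | exact abs_pos.2 (sub_ne_zero.2 (Ne.symm h))

lemma fanLabel_unimodular {N p q : ℤ} (hp : 0 ≤ p) (hpN : p < N) (hq : 0 ≤ q) (hqN : q < N)
    (hpq : p ≠ q) :
    fanLabel p q * fanLabel ((p + 1) % N) ((q + 1) % N)
      = 1 + fanLabel ((p + 1) % N) q * fanLabel p ((q + 1) % N) := by
  wlog hlt : p < q generalizing p q
  · have h := this hq hqN hp hpN hpq.symm (by omega)
    rw [fanLabel_comm q, fanLabel_comm ((q + 1) % N), fanLabel_comm ((q + 1) % N),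
      fanLabel_comm q] at h
    linarith
  have hp1 : (p + 1) % N = p + 1 := Int.emod_eq_of_lt (by omega) (by omega)
  have hq1 : (q + 1) % N = if q + 1 = N then 0 else q + 1 := by
    split_ifs with h
    · rw [h, Int.emod_self]
    · exact Int.emod_eq_of_lt (by omega) (by omega)
  rw [hp1, hq1]
  unfold fanLabel
  -- cases: `p = 0` or not, `q = N - 1` or not
  split_ifs <;> (try simp (disch := omega) only [abs_of_nonneg]) <;> first | omega | ring1 | grind

def fan (N a b : ℤ) : ℤ :=
  fanLabel (a % N) (b % N)

lemma fan_self (N a : ℤ) : fan N a a = 0 := by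
  simp [fan, fanLabel]

lemma fan_add_self (N a : ℤ) : fan N a (a + N) = 0 := by
  rw [fan, ← Int.emod_eq_add_self_emod, ← fan, fan_self]

lemma fan_pos {N a b : ℤ} (h₁ : 0 < b - a) (h₂ : b - a < N) : 0 < fan N a b :=
  fanLabel_pos (Int.emod_ne_emod_of_sub_lt h₁ h₂)

lemma fan_unimodular {N a b : ℤ} (h₁ : 0 < b - a) (h₂ : b - a < N) :
    fan N a b * fan N (a + 1) (b + 1) = 1 + fan N (a + 1) b * fan N a (b + 1) := by
  have hN : 0 < N := by omega
  simp only [fan, ← Int.emod_add_emod a N 1, ← Int.emod_add_emod b N 1]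
  exact fanLabel_unimodular (Int.emod_nonneg a hN.ne') (Int.emod_lt_of_pos a hN)
    (Int.emod_nonneg b hN.ne') (Int.emod_lt_of_pos b hN) (Int.emod_ne_emod_of_sub_lt h₁ h₂)

lemma fan_zero_left {N b : ℤ} (h₀ : 0 < b) (hb : b < N) : fan N 0 b = 1 := by
  simp [fan, fanLabel, Int.emod_eq_of_lt h₀.le hb, h₀.ne, h₀.ne']

lemma fan_one_left {N b : ℤ} (h₁ : 1 ≤ b) (hb : b < N) : fan N 1 b = b - 1 := by
  rw [fan, Int.emod_eq_of_lt (by omega) (by omega : (1 : ℤ) < N),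
    Int.emod_eq_of_lt (by omega) hb, fanLabel]
  split_ifs <;> first | omega | exact abs_of_nonneg (by omega)

end ConwayCoxeter

section yPattern

variable {R : Type*} [CommRing R]

def yPattern (m : ℤ → ℤ → R) (i j : ℤ) : R :=
  m i j * m (i + 1) (j - 1)

lemma yPattern_diamond (m : ℤ → ℤ → R) {i j : ℤ}
    (h₁ : m i j * m (i + 1) (j + 1) = 1 + m (i + 1) j * m i (j + 1))
    (h₂ : m (i + 1) (j - 1) * m (i + 1 + 1) (j - 1 + 1)
      = 1 + m (i + 1 + 1) (j - 1) * m (i + 1) (j - 1 + 1)) :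
    yPattern m i j * yPattern m (i + 1) (j + 1)
      = (1 + yPattern m (i + 1) j) * (1 + yPattern m i (j + 1)) := by
  simp only [yPattern, sub_add_cancel, add_sub_cancel_right] at h₂ ⊢
  linear_combination m (i + 1) (j - 1) * m (i + 1 + 1) j * h₁
    + (1 + m i (j + 1) * m (i + 1) j) * h₂

end yPattern

open ConwayCoxeter

def fanY (n : ℕ) (i j : ℤ) : ℚ :=
  if 2 ≤ j - i ∧ j - i ≤ n + 3 then ((yPattern (fan (n + 3)) i j : ℤ) : ℚ)
  else if j - i = n + 4 then -1 else 0

section fanY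

variable {n : ℕ} {i j : ℤ}

lemma fanY_of_le (h₁ : 2 ≤ j - i) (h₂ : j - i ≤ n + 3) :
    fanY n i j = yPattern (fan (n + 3)) i j := by
  rw [fanY, if_pos ⟨h₁, h₂⟩]

lemma fanY_top (i : ℤ) : fanY n i (i + 2) = 0 := by
  rw [fanY_of_le (by omega) (by omega), yPattern, show i + 2 - 1 = i + 1 by ring, fan_self,
    mul_zero, Int.cast_zero]

lemma fanY_bot (i : ℤ) : fanY n i (i + n + 3) = 0 := by
  rw [fanY_of_le (by omega) (by omega), yPattern, add_assoc i, fan_add_self, zero_mul,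
    Int.cast_zero]

lemma fanY_negRow (i : ℤ) : fanY n i (i + n + 4) = -1 := by
  rw [fanY, if_neg (by omega), if_pos (by omega)]

lemma fanY_outside (h : j - i ≤ 1 ∨ n + 5 ≤ j - i) : fanY n i j = 0 := by
  rw [fanY, if_neg (by omega), if_neg (by omega)]

lemma fanY_diamond (h₁ : 3 ≤ j - i) (h₂ : j - i ≤ n + 3) :
    fanY n i j * fanY n (i + 1) (j + 1) = (1 + fanY n (i + 1) j) * (1 + fanY n i (j + 1)) := by
  rcases h₂.lt_or_eq with h₂ | h₂
  · rw [fanY_of_le (by omega) (by omega), fanY_of_le (by omega) (by omega),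
      fanY_of_le (by omega) (by omega), fanY_of_le (by omega) (by omega)]
    exact_mod_cast yPattern_diamond _ (fan_unimodular (by omega) (by omega))
      (fan_unimodular (by omega) (by omega))
  · obtain rfl : j = i + n + 3 := by omega
    rw [fanY_bot, show i + n + 3 + 1 = i + 1 + n + 3 by ring, fanY_bot,
      show i + 1 + n + 3 = i + n + 4 by ring, fanY_negRow]
    ring

lemma fanY_eq_natCast (i : ℤ) {k : ℕ} (hk₁ : 1 ≤ k) (hk : k ≤ n) :
    ∃ m : ℕ, 0 < m ∧ fanY n i (i + k + 2) = m := by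
  have hpos : 0 < yPattern (fan (n + 3)) i (i + k + 2) :=
    mul_pos (fan_pos (by omega) (by omega)) (fan_pos (by omega) (by omega))
  obtain ⟨m, hm⟩ := Int.eq_ofNat_of_zero_le hpos.le
  refine ⟨m, by omega, ?_⟩
  rw [fanY_of_le (by omega) (by omega), hm, Int.cast_natCast]

lemma fanY_zero_diag {k : ℕ} (hk₁ : 1 ≤ k) (hk : k ≤ n) : fanY n 0 (k + 2) = k := by
  rw [fanY_of_le (by omega) (by omega), yPattern, zero_add, fan_zero_left (by omega) (by omega),
    show (k : ℤ) + 2 - 1 = k + 1 by ring, fan_one_left (by omega) (by omega)]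
  push_cast
  ring

end fanY

def fanYFrieze (n : ℕ) : ClosedYFrieze n where
  b := fanY n
  diamond _ _ := fanY_diamond
  topZero := fanY_top
  botZero := fanY_bot
  negRow := fanY_negRow
  rowsNonzero k hk₁ hk := by
    obtain ⟨m, hm, h⟩ := fanY_eq_natCast 0 hk₁ hk
    exact ⟨0, by rw [h]; exact_mod_cast hm.ne'⟩
  outside _ _ := fanY_outside

lemma fanYFrieze_arithmetic (n : ℕ) : (fanYFrieze n).Arithmetic :=
  fun i _ hk₁ hk => fanY_eq_natCast i hk₁ hk

namespace ClosedYFrieze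

variable {n : ℕ} (P Q : ClosedYFrieze n)

lemma Arithmetic.positive {P : ClosedYFrieze n} (h : P.Arithmetic) : P.Positive := by
  intro i k hk₁ hk
  obtain ⟨m, hm, he⟩ := h i k hk₁ hk
  rw [he]
  exact_mod_cast hm

/-- The north-west to south-east diagonal through `b i (i + 2)`. -/
def diag (i : ℤ) (k : ℕ) : ℚ :=
  P.b i (i + k + 2)

lemma diag_zero (i : ℤ) : P.diag i 0 = 0 := by
  simpa [diag] using P.topZero i

lemma diag_last (i : ℤ) : P.diag i (n + 1) = 0 := by
  simpa [diag, add_assoc, add_left_comm] using P.botZero i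

lemma diag_knit (i : ℤ) {k : ℕ} (hk : k ≤ n) :
    P.diag i (k + 1) * P.diag (i + 1) (k + 1)
      = (1 + P.diag (i + 1) k) * (1 + P.diag i (k + 2)) := by
  have h := P.diamond i (i + k + 3) (by omega) (by omega)
  simp only [diag]
  push_cast
  convert h using 3 <;> ring_nf

lemma diag_negRow (i : ℤ) : P.diag i (n + 2) = -1 := by
  simpa [diag, add_assoc, add_left_comm] using P.negRow i

lemma diag_eq_of_rows {i : ℤ} (h : ∀ k, 1 ≤ k → k ≤ n → P.diag i k = Q.diag i k) :
    P.diag i = Q.diag i := by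
  funext k
  obtain rfl | ⟨hk₁, hk⟩ | rfl | rfl | hk :
      k = 0 ∨ (1 ≤ k ∧ k ≤ n) ∨ k = n + 1 ∨ k = n + 2 ∨ n + 3 ≤ k := by omega
  · rw [diag_zero, diag_zero]
  · exact h k hk₁ hk
  · rw [diag_last, diag_last]
  · rw [diag_negRow, diag_negRow]
  · rw [diag, diag, P.outside _ _ (by omega), Q.outside _ _ (by omega)]

lemma diag_succ_eq {i : ℤ} (hPQ : P.diag i = Q.diag i)
    (hP : ∀ k, 1 ≤ k → k ≤ n → P.diag i k ≠ 0) : P.diag (i + 1) = Q.diag (i + 1) := by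
  suffices h : ∀ k ≤ n, P.diag (i + 1) k = Q.diag (i + 1) k from
    P.diag_eq_of_rows Q fun k _ hk => h k hk
  intro k hk
  induction k with
  | zero => rw [diag_zero, diag_zero]
  | succ k ih =>
    refine mul_left_cancel₀ (hP (k + 1) (by omega) hk) ?_
    calc P.diag i (k + 1) * P.diag (i + 1) (k + 1)
        = (1 + P.diag (i + 1) k) * (1 + P.diag i (k + 2)) := P.diag_knit i (by omega)
      _ = (1 + Q.diag (i + 1) k) * (1 + Q.diag i (k + 2)) := by rw [ih (by omega), hPQ]
      _ = P.diag i (k + 1) * Q.diag (i + 1) (k + 1) := by rw [hPQ, Q.diag_knit i (by omega)]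

lemma diag_eq_of_diag_succ_eq {i : ℤ} (hPQ : P.diag (i + 1) = Q.diag (i + 1))
    (hP : ∀ k, 1 ≤ k → k ≤ n → P.diag (i + 1) k ≠ 0) : P.diag i = Q.diag i := by
  suffices h : ∀ k ≤ n + 1, P.diag i k = Q.diag i k from
    P.diag_eq_of_rows Q fun k _ hk => h k (by omega)
  intro k hk
  induction hk using Nat.decreasingInduction with
  | self => rw [diag_last, diag_last]
  | of_succ k hk ih =>
    rcases k with _ | k
    · rw [diag_zero, diag_zero]
    refine mul_right_cancel₀ (hP (k + 1) (by omega) (by omega)) ?_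
    calc P.diag i (k + 1) * P.diag (i + 1) (k + 1)
        = (1 + P.diag (i + 1) k) * (1 + P.diag i (k + 2)) := P.diag_knit i (by omega)
      _ = (1 + Q.diag (i + 1) k) * (1 + Q.diag i (k + 2)) := by rw [ih, hPQ]
      _ = Q.diag i (k + 1) * P.diag (i + 1) (k + 1) := by rw [hPQ, Q.diag_knit i (by omega)]

lemma diag_eq_of_positive (hP : P.Positive) (h₀ : P.diag 0 = Q.diag 0) (i : ℤ) :
    P.diag i = Q.diag i := by
  have hne : ∀ i k, 1 ≤ k → k ≤ n → P.diag i k ≠ 0 :=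
    fun i k hk₁ hk => (hP i k hk₁ hk).ne'
  induction i with
  | zero => exact h₀
  | succ i ih => exact P.diag_succ_eq Q ih (hne i)
  | pred i ih =>
    refine P.diag_eq_of_diag_succ_eq Q ?_ ?_ <;> rw [sub_add_cancel]
    exacts [ih, hne _]

end ClosedYFrieze

theorem stmt8_general (n : ℕ) :
    (∃ P : ClosedYFrieze n, P.Positive ∧
      ∀ k : ℕ, 1 ≤ k → k ≤ n → P.b 0 ((k : ℤ) + 2) = (k : ℚ)) ∧
    (∀ P : ClosedYFrieze n, P.Positive →
      (∀ k : ℕ, 1 ≤ k → k ≤ n → P.b 0 ((k : ℤ) + 2) = (k : ℚ)) → P.Arithmetic) := by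
  refine ⟨⟨fanYFrieze n, (fanYFrieze_arithmetic n).positive,
    fun k hk₁ hk => fanY_zero_diag hk₁ hk⟩, fun P hP hdiag i k hk₁ hk => ?_⟩
  have h₀ : P.diag 0 = (fanYFrieze n).diag 0 := by
    refine P.diag_eq_of_rows _ fun k hk₁ hk => ?_
    simp only [ClosedYFrieze.diag, zero_add]
    exact (hdiag k hk₁ hk).trans (fanY_zero_diag hk₁ hk).symm
  have hi : P.diag i k = (fanYFrieze n).diag i k := congrFun (P.diag_eq_of_positive _ hP h₀ i) k
  obtain ⟨m, hm, he⟩ := fanYFrieze_arithmetic n i k hk₁ hk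
  exact ⟨m, hm, hi.trans he⟩

/-- The closed Y-frieze pattern of width `n` obtained by horizontal knitting from
the tuple `(1,2,…,n)` placed along a north-west to south-east diagonal (so the
entry of row `k` on the diagonal through position `0` equals `k`) exists and is
arithmetic: all entries of its nonzero rows are positive integers. -/
theorem stmt8 (n : ℕ) (hn : 1 ≤ n) :
    (∃ P : ClosedYFrieze n, P.Positive ∧
      ∀ k : ℕ, 1 ≤ k → k ≤ n → P.b 0 ((k : ℤ) + 2) = (k : ℚ)) ∧
    (∀ P : ClosedYFrieze n, P.Positive →
      (∀ k : ℕ, 1 ≤ k → k ≤ n → P.b 0 ((k : ℤ) + 2) = (k : ℚ)) → P.Arithmetic) :=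
  stmt8_general n
end

section
/- There are exactly 5 arithmetic Y-frieze patterns of width 2, with NW-to-SE diagonals (1,1), (1,2), (2,1), (2,3), (3,2). -/
/-!
A width-2 frieze is determined by its two rows `f i = b i (i+3)` and `g i = b i (i+4)`, and the
diamond rule reduces to `f i * f (i+1) = 1 + g i` and `g i * g (i+1) = 1 + f (i+1)`. When the
entries are nonzero these recurrences run both ways, so the diagonal `(f 0, g 0)` determines the
frieze. For an arithmetic frieze put `a = g (-1)`, `x = f 0`, `b = g 0`, `y = f 1`, `c = g 1`:
then `a b = 1 + x`, `b c = 1 + y`, `x y = 1 + b`, so `b ≤ x + 1`, `b ≤ y + 1` and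
`(b - 1)² ≤ x y = b + 1`, which leaves only five diagonals. Each of them occurs, as a shift of
the 5-periodic rows `1, 2, 2, 1, 3` and `1, 3, 1, 2, 2`.
-/

def widthTwoArray (f g : ℤ → ℚ) (i j : ℤ) : ℚ :=
  if j - i = 3 then f i else if j - i = 4 then g i else if j - i = 6 then -1 else 0

lemma widthTwoArray_add (f g : ℤ → ℚ) (i k : ℤ) :
    widthTwoArray f g i (i + k) =
      if k = 3 then f i else if k = 4 then g i else if k = 6 then -1 else 0 := by
  simp only [widthTwoArray, add_sub_cancel_left]

namespace ClosedYFrieze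

def ofRows (f g : ℤ → ℚ) (hf : ∀ i, f i * f (i + 1) = 1 + g i)
    (hg : ∀ i, g i * g (i + 1) = 1 + f (i + 1)) (hf₀ : ∃ i, f i ≠ 0) (hg₀ : ∃ i, g i ≠ 0) :
    ClosedYFrieze 2 where
  b := widthTwoArray f g
  diamond i j h₁ h₂ := by
    obtain ⟨k, rfl⟩ : ∃ k, j = i + k := ⟨j - i, by ring⟩
    have hk : k = 3 ∨ k = 4 ∨ k = 5 := by push_cast at h₂; omega
    simp only [widthTwoArray, show i + k + 1 - (i + 1) = k by ring,
      show i + k - (i + 1) = k - 1 by ring, show i + k + 1 - i = k + 1 by ring,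
      add_sub_cancel_left]
    rcases hk with rfl | rfl | rfl <;> norm_num
    · linarith [hf i]
    · linarith [hg i]
  topZero i := by rw [widthTwoArray_add]; norm_num
  botZero i := by rw [add_assoc, widthTwoArray_add]; norm_num
  negRow i := by rw [add_assoc, widthTwoArray_add]; norm_num
  rowsNonzero k h₁ h₂ := by
    interval_cases k
    · obtain ⟨i, hi⟩ := hf₀
      exact ⟨i, by rw [add_assoc, widthTwoArray_add]; simpa using hi⟩
    · obtain ⟨i, hi⟩ := hg₀
      exact ⟨i, by rw [add_assoc, widthTwoArray_add]; simpa using hi⟩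
  outside i j h := by
    obtain ⟨k, rfl⟩ : ∃ k, j = i + k := ⟨j - i, by ring⟩
    rw [widthTwoArray_add]
    push_cast at h
    rw [if_neg (by omega), if_neg (by omega), if_neg (by omega)]

variable (P : ClosedYFrieze 2)

def rowOne (i : ℤ) : ℚ := P.b i (i + 3)

def rowTwo (i : ℤ) : ℚ := P.b i (i + 4)

def diagonal : ℚ × ℚ := (P.rowOne 0, P.rowTwo 0)

lemma b_eq_widthTwoArray : P.b = widthTwoArray P.rowOne P.rowTwo := by
  funext i j
  obtain ⟨k, rfl⟩ : ∃ k, j = i + k := ⟨j - i, by ring⟩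
  rw [widthTwoArray_add]
  have hk : k ≤ 1 ∨ k = 2 ∨ k = 3 ∨ k = 4 ∨ k = 5 ∨ k = 6 ∨ 7 ≤ k := by omega
  rcases hk with hk | rfl | rfl | rfl | rfl | rfl | hk
  · rw [P.outside i _ (by omega), if_neg (by omega), if_neg (by omega), if_neg (by omega)]
  · simpa using P.topZero i
  · simp [rowOne]
  · simp [rowTwo]
  · simpa [add_assoc] using P.botZero i
  · simpa [add_assoc] using P.negRow i
  · rw [P.outside i _ (by push_cast; omega), if_neg (by omega), if_neg (by omega),
      if_neg (by omega)]

lemma rowOne_mul_rowOne (i : ℤ) : P.rowOne i * P.rowOne (i + 1) = 1 + P.rowTwo i := by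
  have h := P.diamond i (i + 3) (by omega) (by push_cast; omega)
  have htop : P.b (i + 1) (i + 3) = 0 := by simpa [add_assoc] using P.topZero (i + 1)
  rw [htop] at h
  simpa [rowOne, rowTwo, add_assoc] using h

lemma rowTwo_mul_rowTwo (i : ℤ) : P.rowTwo i * P.rowTwo (i + 1) = 1 + P.rowOne (i + 1) := by
  have h := P.diamond i (i + 4) (by omega) (by push_cast; omega)
  have hbot : P.b i (i + 5) = 0 := by simpa [add_assoc] using P.botZero i
  rw [show i + 4 + 1 = i + 5 by ring, hbot] at h
  simpa [rowOne, rowTwo, add_assoc] using h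

variable {P}

lemma Arithmetic.positive_s11 (hP : P.Arithmetic) : P.Positive := by
  intro i k h₁ h₂
  obtain ⟨m, hm, he⟩ := hP i k h₁ h₂
  rw [he]
  exact_mod_cast hm

lemma Positive.rowOne_pos (hP : P.Positive) (i : ℤ) : 0 < P.rowOne i := by
  simpa [rowOne, add_assoc] using hP i 1 le_rfl one_le_two

lemma Positive.rowTwo_pos (hP : P.Positive) (i : ℤ) : 0 < P.rowTwo i := by
  simpa [rowTwo, add_assoc] using hP i 2 one_le_two le_rfl

lemma rows_eq_of_diagonal_eq {Q : ClosedYFrieze 2} (hP : P.Positive)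
    (h : P.diagonal = Q.diagonal) (i : ℤ) : P.rowOne i = Q.rowOne i ∧ P.rowTwo i = Q.rowTwo i := by
  induction i using Int.induction_on with
  | zero => simpa [diagonal] using h
  | succ i ih =>
    obtain ⟨h₁, h₂⟩ := ih
    have e₁ : P.rowOne (i + 1) = Q.rowOne (i + 1) := by
      refine mul_left_cancel₀ (hP.rowOne_pos i).ne' ?_
      rw [rowOne_mul_rowOne, h₁, rowOne_mul_rowOne, h₂]
    refine ⟨e₁, mul_left_cancel₀ (hP.rowTwo_pos i).ne' ?_⟩
    rw [rowTwo_mul_rowTwo, h₂, rowTwo_mul_rowTwo, e₁]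
  | pred i ih =>
    generalize hj : -(i : ℤ) - 1 = j
    rw [show -(i : ℤ) = j + 1 by omega] at ih
    obtain ⟨h₁, h₂⟩ := ih
    have e₂ : P.rowTwo j = Q.rowTwo j := by
      refine mul_right_cancel₀ (hP.rowTwo_pos (j + 1)).ne' ?_
      rw [rowTwo_mul_rowTwo, h₁, h₂, rowTwo_mul_rowTwo]
    refine ⟨mul_right_cancel₀ (hP.rowOne_pos (j + 1)).ne' ?_, e₂⟩
    rw [rowOne_mul_rowOne, e₂, h₁, rowOne_mul_rowOne]

theorem eq_of_diagonal_eq {Q : ClosedYFrieze 2} (hP : P.Positive)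
    (h : P.diagonal = Q.diagonal) : P = Q := by
  have hb : P.b = Q.b := by
    rw [b_eq_widthTwoArray, b_eq_widthTwoArray]
    congr 1 <;> funext i
    exacts [(rows_eq_of_diagonal_eq hP h i).1, (rows_eq_of_diagonal_eq hP h i).2]
  cases P
  cases Q
  cases hb
  rfl

end ClosedYFrieze

def widthTwoDiagonals : Set (ℚ × ℚ) := {(1, 1), (1, 2), (2, 1), (2, 3), (3, 2)}

lemma cases_of_mul_eq_one_add {a b c x y : ℕ} (h₁ : a * b = 1 + x) (h₂ : b * c = 1 + y)
    (h₃ : x * y = 1 + b) :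
    x = 1 ∧ b = 1 ∨ x = 1 ∧ b = 2 ∨ x = 2 ∧ b = 1 ∨ x = 2 ∧ b = 3 ∨ x = 3 ∧ b = 2 := by
  have ha : 1 ≤ a := Nat.pos_of_ne_zero (by rintro rfl; omega)
  have hc : 1 ≤ c := Nat.pos_of_ne_zero (by rintro rfl; omega)
  have hy : 1 ≤ y := Nat.pos_of_ne_zero (by rintro rfl; omega)
  have hbx : b ≤ x + 1 := by nlinarith
  have hby : b ≤ y + 1 := by nlinarith
  have hb : b ≤ 3 := by nlinarith
  have hx : x ≤ 4 := by nlinarith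
  interval_cases b <;> interval_cases x <;> omega

namespace ClosedYFrieze

lemma Arithmetic.rowOne_eq_natCast {P : ClosedYFrieze 2} (hP : P.Arithmetic) (i : ℤ) :
    ∃ m : ℕ, P.rowOne i = m := by
  obtain ⟨m, -, hm⟩ := hP i 1 le_rfl one_le_two
  exact ⟨m, by simpa [rowOne, rowTwo, add_assoc] using hm⟩

lemma Arithmetic.rowTwo_eq_natCast {P : ClosedYFrieze 2} (hP : P.Arithmetic) (i : ℤ) :
    ∃ m : ℕ, P.rowTwo i = m := by
  obtain ⟨m, -, hm⟩ := hP i 2 one_le_two le_rfl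
  exact ⟨m, by simpa [rowOne, rowTwo, add_assoc] using hm⟩

lemma arithmetic_of_rows {P : ClosedYFrieze 2} (h₁ : ∀ i, ∃ m : ℕ, 0 < m ∧ P.rowOne i = m)
    (h₂ : ∀ i, ∃ m : ℕ, 0 < m ∧ P.rowTwo i = m) : P.Arithmetic := by
  intro i k hk₁ hk₂
  interval_cases k
  · simpa [rowOne, add_assoc] using h₁ i
  · simpa [rowTwo, add_assoc] using h₂ i

lemma Arithmetic.diagonal_mem {P : ClosedYFrieze 2} (hP : P.Arithmetic) :
    P.diagonal ∈ widthTwoDiagonals := by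
  obtain ⟨a, ha⟩ := hP.rowTwo_eq_natCast (-1)
  obtain ⟨x, hx⟩ := hP.rowOne_eq_natCast 0
  obtain ⟨b, hb⟩ := hP.rowTwo_eq_natCast 0
  obtain ⟨y, hy⟩ := hP.rowOne_eq_natCast 1
  obtain ⟨c, hc⟩ := hP.rowTwo_eq_natCast 1
  have h₁ : a * b = 1 + x := by
    exact_mod_cast (by simpa [ha, hb, hx] using P.rowTwo_mul_rowTwo (-1) : (a * b : ℚ) = 1 + x)
  have h₂ : b * c = 1 + y := by
    exact_mod_cast (by simpa [hb, hc, hy] using P.rowTwo_mul_rowTwo 0 : (b * c : ℚ) = 1 + y)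
  have h₃ : x * y = 1 + b := by
    exact_mod_cast (by simpa [hx, hy, hb] using P.rowOne_mul_rowOne 0 : (x * y : ℚ) = 1 + b)
  rcases cases_of_mul_eq_one_add h₁ h₂ h₃ with
    ⟨rfl, rfl⟩ | ⟨rfl, rfl⟩ | ⟨rfl, rfl⟩ | ⟨rfl, rfl⟩ | ⟨rfl, rfl⟩ <;>
    simp [diagonal, widthTwoDiagonals, hx, hb]

def periodicRowOne : ZMod 5 → ℕ := ![1, 2, 2, 1, 3]

def periodicRowTwo : ZMod 5 → ℕ := ![1, 3, 1, 2, 2]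

lemma periodicRowOne_mul (r : ZMod 5) :
    periodicRowOne r * periodicRowOne (r + 1) = 1 + periodicRowTwo r := by
  revert r
  decide

lemma periodicRowTwo_mul (r : ZMod 5) :
    periodicRowTwo r * periodicRowTwo (r + 1) = 1 + periodicRowOne (r + 1) := by
  revert r
  decide

def periodic (s : ZMod 5) : ClosedYFrieze 2 :=
  ofRows (fun i ↦ periodicRowOne (i + s)) (fun i ↦ periodicRowTwo (i + s))
    (fun i ↦ by
      push_cast [add_right_comm _ (1 : ZMod 5)]
      exact_mod_cast periodicRowOne_mul _)
    (fun i ↦ by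
      push_cast [add_right_comm _ (1 : ZMod 5)]
      exact_mod_cast periodicRowTwo_mul _)
    ⟨-s.val, by simp [periodicRowOne]⟩ ⟨-s.val, by simp [periodicRowTwo]⟩

lemma periodic_rowOne (s : ZMod 5) (i : ℤ) : (periodic s).rowOne i = periodicRowOne (i + s) := by
  simp [periodic, ofRows, rowOne, widthTwoArray]

lemma periodic_rowTwo (s : ZMod 5) (i : ℤ) : (periodic s).rowTwo i = periodicRowTwo (i + s) := by
  simp [periodic, ofRows, rowTwo, widthTwoArray]

lemma periodic_arithmetic (s : ZMod 5) : (periodic s).Arithmetic := by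
  have h : ∀ r : ZMod 5, 0 < periodicRowOne r ∧ 0 < periodicRowTwo r := by decide
  refine arithmetic_of_rows (fun i ↦ ?_) (fun i ↦ ?_)
  · exact ⟨_, (h _).1, periodic_rowOne s i⟩
  · exact ⟨_, (h _).2, periodic_rowTwo s i⟩

lemma diagonal_image_arithmetic :
    diagonal '' {P : ClosedYFrieze 2 | P.Arithmetic} = widthTwoDiagonals := by
  refine subset_antisymm (Set.image_subset_iff.2 fun P hP ↦ hP.diagonal_mem) ?_
  intro d hd
  obtain ⟨s, rfl⟩ : ∃ s : ZMod 5, ((periodicRowOne s : ℚ), (periodicRowTwo s : ℚ)) = d := by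
    simp only [widthTwoDiagonals, Set.mem_insert_iff, Set.mem_singleton_iff] at hd
    rcases hd with rfl | rfl | rfl | rfl | rfl
    exacts [⟨0, by norm_cast⟩, ⟨3, by norm_cast⟩, ⟨2, by norm_cast⟩, ⟨1, by norm_cast⟩,
      ⟨4, by norm_cast⟩]
  exact ⟨periodic s, periodic_arithmetic s, by simp [diagonal, periodic_rowOne, periodic_rowTwo]⟩

end ClosedYFrieze

/-- There are exactly 5 arithmetic Y-frieze patterns of width 2, and the NW-to-SE
diagonal `(b 0 3, b 0 4)` of any of them is one of
`(1,1), (1,2), (2,1), (2,3), (3,2)`. -/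
theorem stmt11 :
    {P : ClosedYFrieze 2 | P.Arithmetic}.ncard = 5 ∧
    ∀ P : ClosedYFrieze 2, P.Arithmetic →
      (P.b 0 3, P.b 0 4) ∈ ({(1, 1), (1, 2), (2, 1), (2, 3), (3, 2)} : Set (ℚ × ℚ)) := by
  refine ⟨?_, fun P hP ↦ hP.diagonal_mem⟩
  have hinj : Set.InjOn ClosedYFrieze.diagonal {P : ClosedYFrieze 2 | P.Arithmetic} :=
    fun P hP Q _ h ↦ ClosedYFrieze.eq_of_diagonal_eq hP.positive_s11 h
  rw [← hinj.ncard_image, ClosedYFrieze.diagonal_image_arithmetic]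
  norm_num [widthTwoDiagonals, Set.ncard_insert_of_notMem]
end

section
/- Every closed frieze pattern (a_{i,j}) of width n satisfies the glide symmetry a_{i,j} = a_{j, i+n+3} and hence is periodic of period n+3: a_{i,j} = a_{i+n+3, j+n+3}. -/
/-- A closed (Coxeter) frieze pattern of width `n`: a staggered array `a i j`
(row `k` consists of entries `a i (i+k+1)`) satisfying the diamond rule
`a_{i,j} a_{i+1,j+1} = 1 + a_{i,j+1} a_{i+1,j}`, bounded above and below by
rows of `1`s, and normalized to `0` outside. -/
structure ClosedFrieze (n : ℕ) where
  a : ℤ → ℤ → ℚ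
  diamond : ∀ i j : ℤ, 2 ≤ j - i → j - i ≤ (n : ℤ) + 1 →
    a i j * a (i + 1) (j + 1) = 1 + a i (j + 1) * a (i + 1) j
  topOne : ∀ i : ℤ, a i (i + 1) = 1
  botOne : ∀ i : ℤ, a i (i + (n : ℤ) + 2) = 1
  outside : ∀ i j : ℤ, j - i ≤ 0 ∨ (n : ℤ) + 3 ≤ j - i → a i j = 0

/-- All entries of the interior rows are positive integers. -/
def ClosedFrieze.Arithmetic {n : ℕ} (A : ClosedFrieze n) : Prop :=
  ∀ (i : ℤ) (k : ℕ), 1 ≤ k → k ≤ n → ∃ m : ℕ, 0 < m ∧ A.a i (i + (k : ℤ) + 1) = (m : ℚ)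

/-! Two adjacent diamonds, after cancelling a nonzero entry, give the three-term recurrences
`a i (j+1) + a i (j-1) = c j * a i j` and `a (j-1) k + a (j+1) k = c j * a j k` with the quiddity
`c j = a (j-1) (j+1)`. So `j ↦ a i j` and `j ↦ a j (i+n+3)` solve the same second-order
recurrence with the same initial values `0, 1` and coincide: this is the glide symmetry, and
gliding twice gives the period `n+3`. -/

theorem eqOn_Icc_of_add_eq_mul {R : Type*} [Ring R] {f g c : ℤ → R} {a b : ℤ}
    (h₀ : f a = g a) (h₁ : f (a + 1) = g (a + 1))
    (hf : ∀ j, a < j → j < b → f (j + 1) + f (j - 1) = c j * f j)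
    (hg : ∀ j, a < j → j < b → g (j + 1) + g (j - 1) = c j * g j) :
    Set.EqOn f g (Set.Icc a b) := by
  have pair : ∀ j, a ≤ j → j < b → f j = g j ∧ f (j + 1) = g (j + 1) := by
    intro j hj
    induction j, hj using Int.leInduction with
    | base => exact fun _ ↦ ⟨h₀, h₁⟩
    | succ j hj ih =>
      intro hjb
      obtain ⟨hfg, hfg₁⟩ := ih (by omega)
      refine ⟨hfg₁, ?_⟩
      have hf' := hf (j + 1) (by omega) hjb
      have hg' := hg (j + 1) (by omega) hjb
      rw [add_sub_cancel_right] at hf' hg'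
      rw [eq_sub_of_add_eq hf', eq_sub_of_add_eq hg', hfg, hfg₁]
  rintro j ⟨haj, hjb⟩
  rcases eq_or_lt_of_le haj with rfl | hlt
  · exact h₀
  · simpa using (pair (j - 1) (by omega) (by omega)).2

namespace ClosedFrieze

variable {n : ℕ} (A : ClosedFrieze n)

theorem diamond_of_le {i j : ℤ} (h₁ : 1 ≤ j - i) (h₂ : j - i ≤ (n : ℤ) + 2) :
    A.a i j * A.a (i + 1) (j + 1) = 1 + A.a i (j + 1) * A.a (i + 1) j := by
  rcases eq_or_lt_of_le h₁ with h₁ | h₁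
  · obtain rfl : j = i + 1 := by omega
    rw [A.topOne, A.topOne, A.outside (i + 1) (i + 1) (by omega)]
    ring
  rcases eq_or_lt_of_le h₂ with h₂ | h₂
  · obtain rfl : j = i + n + 2 := by omega
    have hbot := A.botOne (i + 1)
    rw [show i + 1 + n + 2 = i + n + 2 + 1 by ring] at hbot
    rw [A.botOne, hbot, A.outside i (i + n + 2 + 1) (by omega)]
    ring
  exact A.diamond i j (by omega) (by omega)

def InteriorNeZero : Prop :=
  ∀ i j : ℤ, 1 ≤ j - i → j - i ≤ (n : ℤ) + 2 → A.a i j ≠ 0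

/-- The frieze reflected in a vertical line. -/
def reflect : ClosedFrieze n where
  a i j := A.a (-j) (-i)
  diamond i j h₁ h₂ := by
    have h := A.diamond (-(j + 1)) (-(i + 1)) (by omega) (by omega)
    rw [show -(j + 1) + 1 = -j by ring, show -(i + 1) + 1 = -i by ring] at h
    linear_combination h
  topOne i := by
    have h := A.topOne (-(i + 1))
    rwa [show -(i + 1) + 1 = -i by ring] at h
  botOne i := by
    have h := A.botOne (-(i + n + 2))
    rwa [show -(i + n + 2) + n + 2 = -i by ring] at h
  outside i j h := A.outside (-j) (-i) (by omega)

theorem reflect_a (i j : ℤ) : A.reflect.a i j = A.a (-j) (-i) := rfl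

variable {A}

theorem InteriorNeZero.reflect (hA : A.InteriorNeZero) : A.reflect.InteriorNeZero :=
  fun i j h₁ h₂ ↦ hA (-j) (-i) (by omega) (by omega)

theorem recurrence_snd (hA : A.InteriorNeZero) {i j : ℤ} (h₁ : 1 ≤ j - i)
    (h₂ : j - i ≤ (n : ℤ) + 2) :
    A.a i (j + 1) + A.a i (j - 1) = A.a (j - 1) (j + 1) * A.a i j := by
  induction i, (show i ≤ j - 1 by omega) using Int.leInductionDown with
  | base =>
    have htop := A.topOne (j - 1)
    rw [sub_add_cancel] at htop
    rw [htop, A.outside (j - 1) (j - 1) (by omega)]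
    ring
  | pred i hi ih =>
    have ih := ih (by omega) (by omega)
    -- two adjacent diamonds make `(a i (j+1) + a i (j-1)) / a i j` independent of `i`
    have hd := A.diamond_of_le (i := i - 1) (j := j) (by omega) (by omega)
    have hd' := A.diamond_of_le (i := i - 1) (j := j - 1) (by omega) (by omega)
    simp only [sub_add_cancel] at hd hd'
    refine mul_right_cancel₀ (hA i j (by omega) (by omega)) ?_
    linear_combination hd' - hd + A.a (i - 1) j * ih

theorem recurrence_fst (hA : A.InteriorNeZero) {i j : ℤ} (h₁ : 1 ≤ j - i)
    (h₂ : j - i ≤ (n : ℤ) + 2) :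
    A.a (i - 1) j + A.a (i + 1) j = A.a (i - 1) (i + 1) * A.a i j := by
  have h := recurrence_snd hA.reflect (i := -j) (j := -i) (by omega) (by omega)
  simp only [reflect_a, neg_neg] at h
  rw [show -(-i + 1) = i - 1 by ring, show -(-i - 1) = i + 1 by ring] at h
  linear_combination h

theorem glide (hA : A.InteriorNeZero) {i j : ℤ} (h₁ : 0 ≤ j - i) (h₂ : j - i ≤ (n : ℤ) + 3) :
    A.a i j = A.a j (i + n + 3) := by
  refine eqOn_Icc_of_add_eq_mul (f := fun j ↦ A.a i j) (g := fun j ↦ A.a j (i + n + 3))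
    (c := fun j ↦ A.a (j - 1) (j + 1)) (a := i) (b := i + n + 3) ?_ ?_ ?_ ?_ ⟨by omega, by omega⟩
  · rw [A.outside i i (by omega), A.outside i (i + n + 3) (by omega)]
  · simpa [show i + 1 + n + 2 = i + n + 3 by ring, A.topOne] using (A.botOne (i + 1)).symm
  · exact fun j hij hjb ↦ recurrence_snd hA (by omega) (by omega)
  · intro j hij hjb
    rw [add_comm]
    exact recurrence_fst hA (by omega) (by omega)

end ClosedFrieze

/-- Every closed frieze pattern of width `n` (with positive rational entries)
satisfies the glide symmetry `a i j = a j (i+n+3)` and hence is periodic of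
period `n+3`: `a i j = a (i+n+3) (j+n+3)`. -/
theorem stmt16 (n : ℕ) (A : ClosedFrieze n)
    (hpos : ∀ i j : ℤ, 1 ≤ j - i → j - i ≤ (n : ℤ) + 2 → 0 < A.a i j) :
    ∀ i j : ℤ, 1 ≤ j - i → j - i ≤ (n : ℤ) + 2 →
      A.a i j = A.a j (i + (n : ℤ) + 3) ∧
      A.a i j = A.a (i + (n : ℤ) + 3) (j + (n : ℤ) + 3) := by
  have hA : A.InteriorNeZero := fun i j h₁ h₂ ↦ (hpos i j h₁ h₂).ne'
  intro i j h₁ h₂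
  have hglide := A.glide hA (i := i) (j := j) (by omega) (by omega)
  exact ⟨hglide, hglide.trans (A.glide hA (by omega) (by omega))⟩
end
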